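/- arXiv:2010.13274 — 2 statements merged into one kernel-verified Lean document; each statement's English description precedes it below -/
import Mathlib

section
/- Let n > 3, let G be a group, and let r_2, …, r_n ∈ G satisfy the relations (R1)–(R6). Define s_{i-1} = r_i r_2 r_i for all i ∈ [2,n], and assume the elements s_1, …, s_{n-1} satisfy the type A Coxeter relations. Then for every k ∈ [2,n-1], r_{k+1} r_k = s_1 s_2 ⋯ s_{k-1} s_k. -/
/-- The word `s₁ (s₂ s₁) (s₃ s₂ s₁) ⋯ (s_{k-1} s_{k-2} ⋯ s₂ s₁)` in a group. -/
def rwordA {G : Type*} [Group G] (s : ℕ → G) (k : ℕ) : G :=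
  ((List.range (k - 1)).map (fun j => ((List.range (j + 1)).map (fun i => s (j + 1 - i))).prod)).prod

/-- The ascending word `s₁ s₂ ⋯ s_k` in a group. -/
def ascProd {G : Type*} [Group G] (s : ℕ → G) (k : ℕ) : G :=
  ((List.range k).map (fun i => s (i + 1))).prod

/-!
Since the `r_k` are involutions, (R5) at index `k + 1` says exactly that
`r_{k+1} r_k s_{k+1} = (r_{k+1} r_{k+2})⁻¹ = r_{k+2} r_{k+1}`, which is the inductive step
`r_{k+2} r_{k+1} = s_1 ⋯ s_k s_{k+1}`. The base case `r_3 r_2 = s_1 s_2` is the braid relation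
hidden in (R2).
-/

lemma ascProd_succ {G : Type*} [Group G] (s : ℕ → G) (k : ℕ) :
    ascProd s (k + 1) = ascProd s k * s (k + 1) := by
  simp [ascProd, List.range_succ]

section Involutions

variable {G : Type*} [Group G] {a b : G}

lemma mul_eq_of_mul_self_of_pow_three (ha : a * a = 1) (hb : b * b = 1)
    (hab : (a * b) ^ 3 = 1) : b * a = a * a * a * (b * a * b) := by
  have hsq : a * b * (a * b) = (a * b)⁻¹ :=
    eq_inv_of_mul_eq_one_left (by rw [← pow_two, ← pow_succ, hab])
  calc b * a = (a * b)⁻¹ := by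
        rw [mul_inv_rev, inv_eq_of_mul_eq_one_right ha, inv_eq_of_mul_eq_one_right hb]
    _ = a * b * (a * b) := hsq.symm
    _ = a * a * a * (b * a * b) := by rw [ha]; group

lemma mul_eq_of_mul_self_of_rel (ha : a * a = 1) (hb : b * b = 1) {w c : G}
    (hrel : a * w * b * c * b * a * b = 1) : b * a = a * w * (b * c * b) := by
  have hinv : a * w * (b * c * b) = (a * b)⁻¹ :=
    eq_inv_of_mul_eq_one_left (by rw [← hrel]; group)
  rw [hinv, mul_inv_rev, inv_eq_of_mul_eq_one_right ha, inv_eq_of_mul_eq_one_right hb]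

end Involutions

theorem stmt4_general (n : ℕ) (G : Type*) [Group G] (r s : ℕ → G)
    (hR1 : ∀ k, 2 ≤ k → k ≤ n → r k * r k = 1)
    (hR2 : (r 2 * r 3) ^ 3 = 1)
    (hR5 : ∀ k, 3 ≤ k → k ≤ n - 1 →
      r k * r (k - 1) * r (k + 1) * r 2 * r (k + 1) * r k * r (k + 1) = 1)
    (hs : ∀ i, 2 ≤ i → i ≤ n → s (i - 1) = r i * r 2 * r i) :
    ∀ k, 2 ≤ k → k ≤ n - 1 → r (k + 1) * r k = ascProd s k := by
  intro k hk2 hkn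
  induction k, hk2 using Nat.le_induction with
  | base =>
    have hs1 : s 1 = r 2 * r 2 * r 2 := hs 2 le_rfl (by omega)
    have hs2 : s 2 = r 3 * r 2 * r 3 := hs 3 (by omega) (by omega)
    rw [ascProd_succ, ascProd_succ, ascProd, hs1, hs2, List.range_zero, List.map_nil,
      List.prod_nil, one_mul]
    exact mul_eq_of_mul_self_of_pow_three (hR1 2 le_rfl (by omega))
      (hR1 3 (by omega) (by omega)) hR2
  | succ k hk ih =>
    have hsk : s (k + 1) = r (k + 2) * r 2 * r (k + 2) := hs (k + 2) (by omega) (by omega)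
    have hrel := hR5 (k + 1) (by omega) (by omega)
    rw [Nat.add_sub_cancel] at hrel
    rw [ascProd_succ, ← ih (by omega), hsk]
    exact mul_eq_of_mul_self_of_rel (hR1 (k + 1) (by omega) (by omega))
      (hR1 (k + 2) (by omega) (by omega)) hrel

theorem stmt4 (n : ℕ) (hn : 3 < n) (G : Type*) [Group G] (r s : ℕ → G)
    (hR1 : ∀ k, 2 ≤ k → k ≤ n → r k * r k = 1)
    (hR2 : (r 2 * r 3) ^ 3 = 1)
    (hR3 : ∀ k, 4 ≤ k → k ≤ n → (r 2 * r k) ^ 4 = 1)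
    (hR4 : ∀ l k, 4 ≤ l → l ≤ n → 3 ≤ k → k ≤ l - 1 →
      r l * r (l - k + 2) * r 2 * r (l - k + 2) * r l * r k * r 2 * r k = 1)
    (hR5 : ∀ k, 3 ≤ k → k ≤ n - 1 →
      r k * r (k - 1) * r (k + 1) * r 2 * r (k + 1) * r k * r (k + 1) = 1)
    (hR6 : ∀ k, 3 ≤ k → k ≤ n - 1 →
      (r k * r (k - 1)) ^ 2 * r (k + 1) * r 3 * r (k + 1) * r (k - 1) * r (k + 1) = 1)
    (hs : ∀ i, 2 ≤ i → i ≤ n → s (i - 1) = r i * r 2 * r i)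
    (hA1 : ∀ i, 1 ≤ i → i ≤ n - 1 → s i * s i = 1)
    (hA2 : ∀ i, 1 ≤ i → i ≤ n - 2 → (s i * s (i + 1)) ^ 3 = 1)
    (hA3 : ∀ i j, 1 ≤ i → i ≤ n - 3 → i + 2 ≤ j → j ≤ n - 1 → (s i * s j) ^ 2 = 1) :
    ∀ k, 2 ≤ k → k ≤ n - 1 → r (k + 1) * r k = ascProd s k :=
  stmt4_general n G r s hR1 hR2 hR5 hs
end

section
/- Let n > 3, let G be a group, and let r_1, …, r_n ∈ G satisfy the relations (Rb1)–(Rb8). Then (r_2 r_3 r_1)^3 = 1. -/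
/-!
Write `a = r 1`, `b = r 2`, `c = r 3`. Relations (Rb3) and (Rb5) for `k = 3` say that the
involution `c a c` commutes with `a` and with `b`, and (Rb7) for `k = 2` says
`c a b = b c b a c a`. Substituting the latter gives `(b c a)² = c b (c a c)`, and then
`(b c a)³ = c b (c a c) b c a = c (c a c) c a = 1`.
-/

section Involutions

variable {G : Type*} [Group G] {a b c : G}

theorem mul_mul_cancel_left_of_mul_self_eq_one (ha : a * a = 1) (x : G) : a * (a * x) = x := by
  rw [← mul_assoc, ha, one_mul]

theorem conj_mul_self_eq_one (ha : a * a = 1) (hc : c * c = 1) :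
    c * a * c * (c * a * c) = 1 := by
  simp only [mul_assoc, mul_mul_cancel_left_of_mul_self_eq_one ha,
    mul_mul_cancel_left_of_mul_self_eq_one hc, hc]

theorem commute_of_sq_mul_eq_one (ha : a * a = 1) (hb : b * b = 1) (h : (a * b) ^ 2 = 1) :
    Commute a b := by
  have hab : a * b = (a * b)⁻¹ := eq_inv_of_mul_eq_one_left (by rwa [sq] at h)
  rw [Commute, SemiconjBy, hab, mul_inv_rev, inv_eq_of_mul_eq_one_right ha,
    inv_eq_of_mul_eq_one_right hb]

theorem commute_conj_of_pow_four_mul_eq_one (ha : a * a = 1) (hc : c * c = 1)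
    (h : (a * c) ^ 4 = 1) : Commute a (c * a * c) :=
  commute_of_sq_mul_eq_one ha (conj_mul_self_eq_one ha hc)
    (by rw [← h, show 4 = 2 * 2 from rfl, pow_mul, sq (a * c)]; simp only [mul_assoc])

theorem pow_three_eq_one_of_involutions (ha : a * a = 1) (hb : b * b = 1) (hc : c * c = 1)
    (hac : (a * c) ^ 4 = 1) (hcb : (c * a * c * b) ^ 2 = 1)
    (hrel : c * a * b * a * c * a * b * c * b = 1) :
    (b * c * a) ^ 3 = 1 := by
  have ha' := mul_mul_cancel_left_of_mul_self_eq_one ha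
  have hb' := mul_mul_cancel_left_of_mul_self_eq_one hb
  have hc' := mul_mul_cancel_left_of_mul_self_eq_one hc
  have hcab : c * a * b = b * c * b * a * c * a := by
    rw [← mul_inv_eq_one]
    simpa only [mul_inv_rev, inv_eq_of_mul_eq_one_right ha, inv_eq_of_mul_eq_one_right hb,
      inv_eq_of_mul_eq_one_right hc, mul_assoc] using hrel
  have hca : c * a * c * a = a * (c * a * c) := by
    rw [← (commute_conj_of_pow_four_mul_eq_one ha hc hac).eq, mul_assoc]
  have hcacb : c * a * c * b = b * (c * a * c) :=
    (commute_of_sq_mul_eq_one (conj_mul_self_eq_one ha hc) hb hcb).eq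
  have hsq : (b * c * a) ^ 2 = c * b * (c * a * c) :=
    calc (b * c * a) ^ 2 = b * (c * a * b) * (c * a) := by simp only [sq, mul_assoc]
      _ = c * b * a * (c * a * c * a) := by rw [hcab]; simp only [mul_assoc, hb']
      _ = c * b * (c * a * c) := by rw [hca]; simp only [mul_assoc, ha']
  calc (b * c * a) ^ 3 = c * b * (c * a * c * b) * (c * a) := by
        rw [pow_succ, hsq]; simp only [mul_assoc]
    _ = 1 := by rw [hcacb]; simp only [mul_assoc, hb', hc', ha]

end Involutions

theorem stmt9_general (n : ℕ) (hn : 3 < n) (G : Type*) [Group G] (r : ℕ → G)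
    (hRb1 : ∀ k, 1 ≤ k → k ≤ n → r k * r k = 1)
    (hRb3 : ∀ k, 2 ≤ k → k ≤ n → (r 1 * r k) ^ 4 = 1)
    (hRb5 : ∀ k, 3 ≤ k → k ≤ n → (r k * r 1 * r k * r 2) ^ 2 = 1)
    (hRb7 : ∀ k, 2 ≤ k → k ≤ n - 1 →
      r (k + 1) * r 1 * r 2 * r 1 * r (k + 1) * r (k - 1) * r k * r (k + 1) * r k = 1) :
    (r 2 * r 3 * r 1) ^ 3 = 1 :=
  pow_three_eq_one_of_involutions (hRb1 1 le_rfl (by omega)) (hRb1 2 (by omega) (by omega))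
    (hRb1 3 (by omega) (by omega)) (hRb3 3 (by omega) (by omega)) (hRb5 3 (by omega) (by omega))
    (hRb7 2 le_rfl (by omega))

theorem stmt9 (n : ℕ) (hn : 3 < n) (G : Type*) [Group G] (r : ℕ → G)
    (hRb1 : ∀ k, 1 ≤ k → k ≤ n → r k * r k = 1)
    (hRb2 : (r 2 * r 3) ^ 6 = 1)
    (hRb3 : ∀ k, 2 ≤ k → k ≤ n → (r 1 * r k) ^ 4 = 1)
    (hRb4 : ∀ k, 4 ≤ k → k ≤ n → (r 1 * r 2 * r 1 * r k) ^ 4 = 1)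
    (hRb5 : ∀ k, 3 ≤ k → k ≤ n → (r k * r 1 * r k * r 2) ^ 2 = 1)
    (hRb6 : ∀ k, 2 ≤ k → k ≤ n - 1 →
      r k * r 1 * r 2 * r 1 * r k * r (k + 1) * r 2 * r 3 * r 2 * r 1 * r (k + 1) = 1)
    (hRb7 : ∀ k, 2 ≤ k → k ≤ n - 1 →
      r (k + 1) * r 1 * r 2 * r 1 * r (k + 1) * r (k - 1) * r k * r (k + 1) * r k = 1)
    (hRb8 : ∀ k l, 2 ≤ k → k ≤ n - 2 → k + 2 ≤ l → l ≤ n →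
      r k * r 1 * r 2 * r 1 * r k * r l * r (l - k + 2) * r 1 * r 2 * r 1 * r (l - k + 2) * r l = 1) :
    (r 2 * r 3 * r 1) ^ 3 = 1 :=
  stmt9_general n hn G r hRb1 hRb3 hRb5 hRb7
end
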